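/- arXiv:1910.14276 — 3 statements merged into one kernel-verified Lean document; each statement's English description precedes it below -/
import Mathlib

section
/- For every edge $e$ of a connected graph with resistances $r > 0$ and demand $d$, the partial derivative of the electric energy with respect to the resistance of edge $e$ equals the square of the flow on that edge: $\frac{\partial}{\partial r_e}\mathcal{E}_r(\hat{f}_r) = [\hat{f}_r]_e^2$, where $\hat{f}_r$ is the electric $d$-flow for resistances $r$. -/
/-!
Changing `r e` to `t` perturbs `L_r` by the rank-one term `s • b bᵀ`, where `b = B e` and
`s = t⁻¹ - (r e)⁻¹`. Since `ker L_r` consists of the constants, `L_r†` inverts `L_r` on vectors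
of zero sum, so Sherman–Morrison gives the energy in closed form,
`E(t) = dᵀ L_r† d - s (bᵀ L_r† d)² / (1 + s bᵀ L_r† b)`, whose derivative at `t = r e` is
`(bᵀ L_r† d / r e)² = (f̂_r)_e²`.
-/

open Matrix Filter Topology

lemma Matrix.IsSymm.dotProduct_mulVec_comm {n R : Type*} [Fintype n] [CommSemiring R]
    {L : Matrix n n R} (hL : L.IsSymm) (x y : n → R) : x ⬝ᵥ L *ᵥ y = L *ᵥ x ⬝ᵥ y := by
  rw [dotProduct_mulVec, ← mulVec_transpose, hL.eq]

section PseudoInverse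

variable {n R K : Type*} [Fintype n] [CommSemiring R] [Field K]

lemma mul_mul_eq_self_of_penrose {L M : Matrix n n R} (hL : L.IsSymm) (h1 : L * M * L = L)
    (h3 : (L * M)ᵀ = L * M) : L * (L * M) = L := by
  calc L * (L * M) = Lᵀ * (L * M)ᵀ := by rw [hL.eq, h3]
    _ = L := by rw [← transpose_mul, h1, hL.eq]

lemma dotProduct_mulVec_eq_of_mulVec_eq {L M : Matrix n n R} (hL : L.IsSymm)
    (h1 : L * M * L = L) {x d : n → R} (hx : L *ᵥ x = d) : d ⬝ᵥ M *ᵥ d = x ⬝ᵥ d := by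
  rw [← hx, ← hL.dotProduct_mulVec_comm, mulVec_mulVec, mulVec_mulVec, h1]

lemma add_smul_vecMulVec_mulVec_sub_smul (L : Matrix n n K) {b d g h : n → K} {s : K}
    (hg : L *ᵥ g = d) (hh : L *ᵥ h = b) (hden : 1 + s * (b ⬝ᵥ h) ≠ 0) :
    (L + s • vecMulVec b b) *ᵥ (g - (s * (b ⬝ᵥ g) / (1 + s * (b ⬝ᵥ h))) • h) = d := by
  set α := s * (b ⬝ᵥ g) / (1 + s * (b ⬝ᵥ h))
  have hα : α * (1 + s * (b ⬝ᵥ h)) = s * (b ⬝ᵥ g) := div_mul_cancel₀ _ hden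
  ext i
  simp only [add_mulVec, smul_mulVec, vecMulVec_mulVec, op_smul_eq_smul, mulVec_sub,
    mulVec_smul, hg, hh, Pi.add_apply, Pi.sub_apply, Pi.smul_apply, smul_eq_mul]
  linear_combination (-b i) * hα

lemma sherman_morrison_energy {L M : Matrix n n K} (hL : L.IsSymm) {b d g h : n → K} {s : K}
    (hg : L *ᵥ g = d) (hh : L *ᵥ h = b) (hden : 1 + s * (b ⬝ᵥ h) ≠ 0)
    (h1 : (L + s • vecMulVec b b) * M * (L + s • vecMulVec b b) = L + s • vecMulVec b b) :
    d ⬝ᵥ M *ᵥ d = d ⬝ᵥ g - s * (b ⬝ᵥ g) ^ 2 / (1 + s * (b ⬝ᵥ h)) := by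
  have hL' : (L + s • vecMulVec b b).IsSymm :=
    hL.add ((show (vecMulVec b b).IsSymm from transpose_vecMulVec b b).smul s)
  have hhd : h ⬝ᵥ d = b ⬝ᵥ g := by rw [← hg, hL.dotProduct_mulVec_comm, hh]
  rw [dotProduct_mulVec_eq_of_mulVec_eq hL' h1 (add_smul_vecMulVec_mulVec_sub_smul L hg hh hden),
    sub_dotProduct, smul_dotProduct, hhd, dotProduct_comm g d, smul_eq_mul]
  ring

end PseudoInverse

section WeightedLaplacian

variable {V E : Type*} [Fintype E] [DecidableEq E] (B : Matrix E V ℝ)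

noncomputable def weightedLaplacian (r : E → ℝ) : Matrix V V ℝ :=
  Bᵀ * diagonal (fun e => (r e)⁻¹) * B

lemma isSymm_weightedLaplacian (r : E → ℝ) : (weightedLaplacian B r).IsSymm := by
  simp only [IsSymm, weightedLaplacian, transpose_mul, transpose_transpose, diagonal_transpose,
    Matrix.mul_assoc]

lemma weightedLaplacian_update (r : E → ℝ) (e : E) (t : ℝ) :
    weightedLaplacian B (Function.update r e t) =
      weightedLaplacian B r + (t⁻¹ - (r e)⁻¹) • vecMulVec (B e) (B e) := by
  have hweights : (fun e' => (Function.update r e t e')⁻¹) =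
      fun e' => (r e')⁻¹ + (Pi.single e (t⁻¹ - (r e)⁻¹) : E → ℝ) e' := by
    ext e'
    rcases eq_or_ne e' e with rfl | h <;> simp [*]
  rw [weightedLaplacian, weightedLaplacian, hweights, ← diagonal_add, Matrix.mul_add,
    Matrix.add_mul]
  congr 1
  ext i j
  simp only [Matrix.mul_apply, transpose_apply, diagonal_apply, Pi.single_apply, mul_ite, mul_zero,
    Finset.sum_ite_eq', Finset.mem_univ, ↓reduceIte, ite_mul, zero_mul, Matrix.smul_apply,
    vecMulVec_apply, smul_eq_mul]
  ring

variable [Fintype V]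

lemma dotProduct_weightedLaplacian_mulVec (r : E → ℝ) (z : V → ℝ) :
    z ⬝ᵥ weightedLaplacian B r *ᵥ z = ∑ e, (r e)⁻¹ * (B *ᵥ z) e ^ 2 := by
  rw [weightedLaplacian, ← mulVec_mulVec, ← mulVec_mulVec, dotProduct_mulVec,
    ← mulVec_transpose, transpose_transpose]
  simp only [dotProduct, mulVec_diagonal]
  exact Finset.sum_congr rfl fun e _ => by ring

lemma mulVec_eq_zero_of_weightedLaplacian_mulVec_eq_zero {r : E → ℝ} (hr : ∀ e, 0 < r e)
    {z : V → ℝ} (hz : weightedLaplacian B r *ᵥ z = 0) : B *ᵥ z = 0 := by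
  have henergy := dotProduct_weightedLaplacian_mulVec B r z
  rw [hz, dotProduct_zero, eq_comm,
    Finset.sum_eq_zero_iff_of_nonneg fun e _ => by have := hr e; positivity] at henergy
  funext e
  simpa [(hr e).ne'] using henergy e (Finset.mem_univ e)

lemma weightedLaplacian_mulVec_mulVec_of_sum_eq_zero {r : E → ℝ} (hr : ∀ e, 0 < r e)
    (hconn : ∀ x : V → ℝ, B *ᵥ x = 0 → ∃ c : ℝ, ∀ v, x v = c) {M : Matrix V V ℝ}
    (h1 : weightedLaplacian B r * M * weightedLaplacian B r = weightedLaplacian B r)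
    (h3 : (weightedLaplacian B r * M)ᵀ = weightedLaplacian B r * M)
    {y : V → ℝ} (hy : ∑ v, y v = 0) : weightedLaplacian B r *ᵥ M *ᵥ y = y := by
  set L := weightedLaplacian B r
  set w := y - L *ᵥ M *ᵥ y
  have hLw : L *ᵥ w = 0 := by
    rw [mulVec_sub, mulVec_mulVec, mulVec_mulVec, Matrix.mul_assoc,
      mul_mul_eq_self_of_penrose (isSymm_weightedLaplacian B r) h1 h3, sub_self]
  obtain ⟨c, hc⟩ := hconn w (mulVec_eq_zero_of_weightedLaplacian_mulVec_eq_zero B hr hLw)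
  have hww : w ⬝ᵥ w = 0 :=
    calc w ⬝ᵥ w = w ⬝ᵥ y - L *ᵥ w ⬝ᵥ M *ᵥ y := by
          rw [← (isSymm_weightedLaplacian B r).dotProduct_mulVec_comm, ← dotProduct_sub]
      _ = c * ∑ v, y v := by
          rw [hLw, zero_dotProduct, sub_zero]
          simp only [dotProduct, hc, Finset.mul_sum]
      _ = 0 := by rw [hy, mul_zero]
  exact (sub_eq_zero.1 (dotProduct_self_eq_zero.1 hww)).symm

end WeightedLaplacian

lemma hasDerivAt_sub_inv_sub_inv_mul_div (E₀ c β : ℝ) {a : ℝ} (ha : a ≠ 0) :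
    HasDerivAt (fun t => E₀ - (t⁻¹ - a⁻¹) * c ^ 2 / (1 + (t⁻¹ - a⁻¹) * β)) ((c / a) ^ 2) a := by
  have hs : HasDerivAt (fun t : ℝ => t⁻¹ - a⁻¹) (-(a ^ 2)⁻¹) a :=
    (hasDerivAt_inv ha).sub_const _
  have hden : HasDerivAt (fun t : ℝ => 1 + (t⁻¹ - a⁻¹) * β) (-(a ^ 2)⁻¹ * β) a :=
    (hs.mul_const β).const_add 1
  refine (((hs.mul_const (c ^ 2)).div hden (by simp)).const_sub E₀).congr_deriv ?_
  simp only [sub_self, zero_mul, add_zero]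
  field_simp
  ring

/-- The partial derivative of the electric energy `E_r(f̂_r) = dᵀ L_r† d` with
respect to the resistance of edge `e` equals the square of the flow on that
edge: `∂E/∂r_e = [f̂_r]_e²`, where `f̂_r = diag(r)⁻¹ B L_r† d`. -/
theorem deriv_energy_eq_flow_sq {V E : Type*} [Fintype V] [Fintype E]
    [DecidableEq V] [DecidableEq E]
    (B : Matrix E V ℝ)
    (hrows : ∀ e : E, ∃ u v : V, u ≠ v ∧
      ∀ w, B e w = (if w = v then (1 : ℝ) else 0) - (if w = u then 1 else 0))
    (hconn : ∀ x : V → ℝ, B.mulVec x = 0 → ∃ c : ℝ, ∀ v, x v = c)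
    (d : V → ℝ) (hd : ∑ v, d v = 0)
    (Ld : (E → ℝ) → Matrix V V ℝ)
    (hLd : ∀ r : E → ℝ, (∀ e, 0 < r e) →
      (B.transpose * Matrix.diagonal (fun e => (r e)⁻¹) * B) * Ld r *
          (B.transpose * Matrix.diagonal (fun e => (r e)⁻¹) * B) =
        B.transpose * Matrix.diagonal (fun e => (r e)⁻¹) * B ∧
      Ld r * (B.transpose * Matrix.diagonal (fun e => (r e)⁻¹) * B) * Ld r = Ld r ∧
      ((B.transpose * Matrix.diagonal (fun e => (r e)⁻¹) * B) * Ld r).transpose =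
        (B.transpose * Matrix.diagonal (fun e => (r e)⁻¹) * B) * Ld r ∧
      (Ld r * (B.transpose * Matrix.diagonal (fun e => (r e)⁻¹) * B)).transpose =
        Ld r * (B.transpose * Matrix.diagonal (fun e => (r e)⁻¹) * B))
    (r : E → ℝ) (hr : ∀ e, 0 < r e) :
    ∀ e : E, HasDerivAt (fun t : ℝ => d ⬝ᵥ (Ld (Function.update r e t)).mulVec d)
      ((B.mulVec ((Ld r).mulVec d) e / r e) ^ 2) (r e) := by
  intro e
  obtain ⟨h1, -, h3, -⟩ := hLd r hr
  have hrow : ∑ w, B e w = 0 := by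
    obtain ⟨u, v, -, hB⟩ := hrows e
    simp [hB, Finset.sum_sub_distrib]
  set g := Ld r *ᵥ d
  set h := Ld r *ᵥ B e
  have hg : weightedLaplacian B r *ᵥ g = d :=
    weightedLaplacian_mulVec_mulVec_of_sum_eq_zero B hr hconn h1 h3 hd
  have hh : weightedLaplacian B r *ᵥ h = B e :=
    weightedLaplacian_mulVec_mulVec_of_sum_eq_zero B hr hconn h1 h3 hrow
  have hden : ∀ᶠ t in 𝓝 (r e), 1 + (t⁻¹ - (r e)⁻¹) * (B e ⬝ᵥ h) ≠ 0 :=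
    (((continuousAt_inv₀ (hr e).ne').sub_const _).mul_const _).const_add 1 |>.eventually_ne
      (by simp)
  have henergy : (fun t => d ⬝ᵥ Ld (Function.update r e t) *ᵥ d) =ᶠ[𝓝 (r e)]
      fun t => d ⬝ᵥ g - (t⁻¹ - (r e)⁻¹) * (B *ᵥ g) e ^ 2 /
        (1 + (t⁻¹ - (r e)⁻¹) * (B e ⬝ᵥ h)) := by
    filter_upwards [eventually_gt_nhds (hr e), hden] with t ht ht_den
    have hr' : ∀ e', 0 < Function.update r e t e' :=
      (Function.forall_update_iff r fun _ x => 0 < x).2 ⟨ht, fun e' _ => hr e'⟩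
    have h1' := (hLd _ hr').1
    rw [← weightedLaplacian, weightedLaplacian_update] at h1'
    exact sherman_morrison_energy (isSymm_weightedLaplacian B r) hg hh ht_den h1'
  exact (hasDerivAt_sub_inv_sub_inv_mul_div _ _ _ (hr e).ne').congr_of_eventuallyEq henergy
end

section
/- Let $G$ be a connected graph with incidence matrix $B$, resistances $r \in \mathbb{R}^E_{>0}$, demand $d$ orthogonal to the all-ones vector, and electric $d$-flow $\hat{f}_r$ with energy $\mathcal{E}_r = \mathcal{E}_r(\hat{f}_r) > 0$. For any $r' \in \mathbb{R}^E_{\ge 0}$ with $r'_e \le r_e$ for all $e$, the electric flow $\hat{f}_{r+r'}$ for resistances $r+r'$ satisfies $\log \mathcal{E}_{r+r'}(\hat{f}_{r+r'}) - \log \mathcal{E}_r(\hat{f}_r) \ge \frac{1}{2}\sum_{e \in E} \frac{r'_e [\hat{f}_r]_e^2}{\mathcal{E}_r(\hat{f}_r)}$. -/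
open scoped Matrix

open Finset Real

/-!
Minimality of `f̂_r` among `d`-flows makes it `r`-orthogonal to every circulation, so
`∑ r f̂_r f = 𝓔_r` for every `d`-flow `f`. Cauchy–Schwarz with weights `r + r'` then gives
`𝓔_r² ≤ 𝓔_{r+r'}(f) · ∑ r² f̂_r² / (r + r')`, and `r'_e ≤ r_e` bounds the last sum by
`𝓔_r - ½ ∑ r' f̂_r²`. Taking logarithms and using `log x ≥ 1 - 1/x` finishes the proof.
-/

noncomputable def energy {E : Type*} [Fintype E] (r f : E → ℝ) : ℝ := ∑ e, r e * f e ^ 2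

section Energy

variable {E : Type*} [Fintype E]

theorem energy_nonneg {r : E → ℝ} (hr : ∀ e, 0 ≤ r e) (f : E → ℝ) : 0 ≤ energy r f :=
  sum_nonneg fun e _ => mul_nonneg (hr e) (sq_nonneg _)

theorem energy_mono {r r' : E → ℝ} (h : ∀ e, r' e ≤ r e) (f : E → ℝ) :
    energy r' f ≤ energy r f :=
  sum_le_sum fun e _ => mul_le_mul_of_nonneg_right (h e) (sq_nonneg _)

theorem energy_add_smul (r f g : E → ℝ) (t : ℝ) :
    energy r (f + t • g) =
      energy r g * (t * t) + 2 * (∑ e, r e * f e * g e) * t + energy r f := by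
  simp only [energy, sum_mul, mul_sum, ← sum_add_distrib]
  refine sum_congr rfl fun e _ => ?_
  simp only [Pi.add_apply, Pi.smul_apply, smul_eq_mul]
  ring

/-- First-order optimality of an energy minimizer under linear constraints: `t ↦ 𝓔_r(f₁ + t g)`
is a quadratic minimized at `t = 0`, so its discriminant forces the linear coefficient to vanish. -/
theorem sum_mul_mul_eq_zero_of_forall_energy_le {ι : Type*} (A : Matrix ι E ℝ) {d : ι → ℝ}
    {r f₁ g : E → ℝ} (hf₁ : A *ᵥ f₁ = d)
    (hmin : ∀ f, A *ᵥ f = d → energy r f₁ ≤ energy r f) (hg : A *ᵥ g = 0) :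
    ∑ e, r e * f₁ e * g e = 0 := by
  have hquad : ∀ t : ℝ, 0 ≤ energy r g * (t * t) + 2 * (∑ e, r e * f₁ e * g e) * t + 0 := by
    intro t
    have hfeas : A *ᵥ (f₁ + t • g) = d := by
      rw [Matrix.mulVec_add, Matrix.mulVec_smul, hg, smul_zero, add_zero, hf₁]
    have := hmin _ hfeas
    rw [energy_add_smul] at this
    linarith
  have hdisc := discrim_le_zero hquad
  rw [discrim] at hdisc
  nlinarith [sq_nonneg (∑ e, r e * f₁ e * g e)]

theorem sum_mul_mul_eq_energy_of_forall_energy_le {ι : Type*} (A : Matrix ι E ℝ) {d : ι → ℝ}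
    {r f₁ f₂ : E → ℝ} (hf₁ : A *ᵥ f₁ = d)
    (hmin : ∀ f, A *ᵥ f = d → energy r f₁ ≤ energy r f) (hf₂ : A *ᵥ f₂ = d) :
    ∑ e, r e * f₁ e * f₂ e = energy r f₁ := by
  have horth := sum_mul_mul_eq_zero_of_forall_energy_le A hf₁ hmin (g := f₂ - f₁)
    (by rw [Matrix.mulVec_sub, hf₁, hf₂, sub_self])
  simp only [Pi.sub_apply, mul_sub, sum_sub_distrib, sub_eq_zero] at horth
  rw [horth, energy]
  exact sum_congr rfl fun e _ => by ring

theorem sq_sum_mul_le_energy_mul_sum_sq_div {w : E → ℝ} (hw : ∀ e, 0 < w e) (x y : E → ℝ) :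
    (∑ e, x e * y e) ^ 2 ≤ energy w x * ∑ e, y e ^ 2 / w e :=
  sum_sq_le_sum_mul_sum_of_sq_le_mul _
    (fun e _ => mul_nonneg (hw e).le (sq_nonneg _))
    (fun e _ => div_nonneg (sq_nonneg _) (hw e).le)
    fun e _ => le_of_eq <| by field_simp [(hw e).ne']

theorem sq_div_add_le_sub_half {a b : ℝ} (ha : 0 < a) (hb : 0 ≤ b) (hba : b ≤ a) :
    a ^ 2 / (a + b) ≤ a - b / 2 := by
  rw [div_le_iff₀ (by linarith)]
  nlinarith [mul_nonneg hb (sub_nonneg.2 hba)]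

theorem sum_sq_div_add_le_energy_sub_half {r r' : E → ℝ} (hr : ∀ e, 0 < r e)
    (hr'0 : ∀ e, 0 ≤ r' e) (hr'le : ∀ e, r' e ≤ r e) (f : E → ℝ) :
    ∑ e, (r e * f e) ^ 2 / (r e + r' e) ≤ energy r f - energy r' f / 2 := by
  rw [energy, energy, sum_div, ← sum_sub_distrib]
  refine sum_le_sum fun e _ => ?_
  calc (r e * f e) ^ 2 / (r e + r' e) = r e ^ 2 / (r e + r' e) * f e ^ 2 := by ring
    _ ≤ (r e - r' e / 2) * f e ^ 2 :=
      mul_le_mul_of_nonneg_right (sq_div_add_le_sub_half (hr e) (hr'0 e) (hr'le e)) (sq_nonneg _)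
    _ = r e * f e ^ 2 - r' e * f e ^ 2 / 2 := by ring

theorem sq_energy_le_energy_add_mul {ι : Type*} (A : Matrix ι E ℝ) {d : ι → ℝ}
    {r r' f₁ f₂ : E → ℝ} (hr : ∀ e, 0 < r e) (hr'0 : ∀ e, 0 ≤ r' e) (hr'le : ∀ e, r' e ≤ r e)
    (hf₁ : A *ᵥ f₁ = d) (hmin : ∀ f, A *ᵥ f = d → energy r f₁ ≤ energy r f)
    (hf₂ : A *ᵥ f₂ = d) :
    energy r f₁ ^ 2 ≤ energy (r + r') f₂ * (energy r f₁ - energy r' f₁ / 2) := by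
  have hrr' : ∀ e, 0 < (r + r') e := fun e => add_pos_of_pos_of_nonneg (hr e) (hr'0 e)
  calc energy r f₁ ^ 2 = (∑ e, f₂ e * (r e * f₁ e)) ^ 2 := by
        rw [← sum_mul_mul_eq_energy_of_forall_energy_le A hf₁ hmin hf₂]
        simp only [mul_comm, mul_left_comm]
    _ ≤ energy (r + r') f₂ * ∑ e, (r e * f₁ e) ^ 2 / (r e + r' e) :=
      sq_sum_mul_le_energy_mul_sum_sq_div hrr' _ _
    _ ≤ energy (r + r') f₂ * (energy r f₁ - energy r' f₁ / 2) :=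
      mul_le_mul_of_nonneg_left (sum_sq_div_add_le_energy_sub_half hr hr'0 hr'le f₁)
        (energy_nonneg (fun e => (hrr' e).le) f₂)

end Energy

theorem one_sub_div_le_log_sub_log {x y z : ℝ} (hx : 0 < x) (hy : 0 < y) (h : x ^ 2 ≤ z * y) :
    1 - y / x ≤ log z - log x := by
  have hxy : x / y ≤ z / x := by
    rw [div_le_div_iff₀ hy hx]
    nlinarith
  have hz : 0 < z := by
    have := (div_pos hx hy).trans_le hxy
    rwa [div_pos_iff_of_pos_right hx] at this
  calc 1 - y / x = 1 - (x / y)⁻¹ := by rw [inv_div]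
    _ ≤ log (x / y) := one_sub_inv_le_log_of_pos (div_pos hx hy)
    _ ≤ log (z / x) := log_le_log (div_pos hx hy) hxy
    _ = log z - log x := log_div hz.ne' hx.ne'

theorem log_energy_increase_general {V E : Type*} [Fintype E]
    (B : Matrix E V ℝ)
    (d : V → ℝ)
    (r : E → ℝ) (hr : ∀ e, 0 < r e)
    (r' : E → ℝ) (hr'0 : ∀ e, 0 ≤ r' e) (hr'le : ∀ e, r' e ≤ r e)
    (f1 : E → ℝ) (hf1d : B.transpose.mulVec f1 = d)
    (hf1min : ∀ f : E → ℝ, B.transpose.mulVec f = d →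
      ∑ e, r e * f1 e ^ 2 ≤ ∑ e, r e * f e ^ 2)
    (f2 : E → ℝ) (hf2d : B.transpose.mulVec f2 = d)
    (hE : 0 < ∑ e, r e * f1 e ^ 2) :
    Real.log (∑ e, (r e + r' e) * f2 e ^ 2) - Real.log (∑ e, r e * f1 e ^ 2) ≥
      (1 / 2) * ∑ e, r' e * f1 e ^ 2 / (∑ e, r e * f1 e ^ 2) := by
  change 0 < energy r f1 at hE
  have hhalf : 0 < energy r f1 - energy r' f1 / 2 := by
    linarith [energy_mono hr'le f1]
  have hlog := one_sub_div_le_log_sub_log hE hhalf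
    (sq_energy_le_energy_add_mul Bᵀ hr hr'0 hr'le hf1d hf1min hf2d)
  rw [ge_iff_le, ← sum_div]
  calc 1 / 2 * (energy r' f1 / energy r f1)
      = 1 - (energy r f1 - energy r' f1 / 2) / energy r f1 := by
        field_simp
        ring
    _ ≤ _ := hlog

/-- Energy boosting: increasing each resistance by `r'_e ≤ r_e` increases the
logarithm of the electric energy by at least `(1/2)∑_e r'_e [f̂_r]_e² / E_r(f̂_r)`. -/
theorem log_energy_increase {V E : Type*} [Fintype V] [Fintype E] [DecidableEq V]
    (B : Matrix E V ℝ)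
    (hrows : ∀ e : E, ∃ u v : V, u ≠ v ∧
      ∀ w, B e w = (if w = v then (1 : ℝ) else 0) - (if w = u then 1 else 0))
    (hconn : ∀ x : V → ℝ, B.mulVec x = 0 → ∃ c : ℝ, ∀ v, x v = c)
    (d : V → ℝ) (hd : ∑ v, d v = 0)
    (r : E → ℝ) (hr : ∀ e, 0 < r e)
    (r' : E → ℝ) (hr'0 : ∀ e, 0 ≤ r' e) (hr'le : ∀ e, r' e ≤ r e)
    (f1 : E → ℝ) (hf1d : B.transpose.mulVec f1 = d)
    (hf1min : ∀ f : E → ℝ, B.transpose.mulVec f = d →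
      ∑ e, r e * f1 e ^ 2 ≤ ∑ e, r e * f e ^ 2)
    (f2 : E → ℝ) (hf2d : B.transpose.mulVec f2 = d)
    (hf2min : ∀ f : E → ℝ, B.transpose.mulVec f = d →
      ∑ e, (r e + r' e) * f2 e ^ 2 ≤ ∑ e, (r e + r' e) * f e ^ 2)
    (hE : 0 < ∑ e, r e * f1 e ^ 2) :
    Real.log (∑ e, (r e + r' e) * f2 e ^ 2) - Real.log (∑ e, r e * f1 e ^ 2) ≥
      (1 / 2) * ∑ e, r' e * f1 e ^ 2 / (∑ e, r e * f1 e ^ 2) :=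
  log_energy_increase_general B d r hr r' hr'0 hr'le f1 hf1d hf1min f2 hf2d hE
end

section
/- Dual-norm smoothing of the budget constraint: let $B$, $R = \mathrm{diag}(r)$ with $r > 0$, positive diagonal $C$, demand $d$, budget $W \ge 0$, and $p, q \in (1,\infty)$ with $1/p + 1/q = 1$. Then $\max_{r' \ge 0, \|Cr'\|_q \le W} \min_{B^Tf=d} f^T(R+\mathrm{diag}(r'))f = \min_{B^Tf=d}\left(f^TRf + W\|C^{-1/2}f\|_{2p}^2\right)$. -/
/-! Let `f⋆` minimize the smoothed energy `fᵀRf + W ‖f²/C‖_p` on the affine set `Bᵀf = d`; it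
exists by coercivity, and the set is nonempty because `d` is orthogonal to `ker B`. For every
admissible `r'`, Hölder's inequality gives `∑ r' f² ≤ W ‖f²/C‖_p`, so each inner minimum is at
most the smoothed energy of `f⋆`. Conversely, the extremal vector of Hölder's inequality for
`f⋆²/C` yields an admissible `r⋆` with `∑ r⋆ f⋆² = W ‖f⋆²/C‖_p`. This extremal vector is also the
gradient of `‖·‖_p`, so the first-order condition for `f⋆` as a minimizer of the smoothed energy
is exactly the first-order condition for the convex quadratic energy with weights `r + r⋆`. Hence
`f⋆` also minimizes that quadratic energy, and the two sides agree without a minimax theorem. -/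

open Finset
open scoped Matrix

theorem exists_transpose_mulVec_eq {K V E : Type*} [Field K] [LinearOrder K]
    [IsStrictOrderedRing K] [Fintype V] [Fintype E] [DecidableEq V] (B : Matrix E V K)
    (hker : ∀ x : V → K, B *ᵥ x = 0 → ∃ c : K, ∀ v, x v = c)
    (d : V → K) (hd : ∑ v, d v = 0) : ∃ f : E → K, Bᵀ *ᵥ f = d := by
  by_contra! hd_range
  obtain ⟨φ, hφd, hφ⟩ := Submodule.exists_le_ker_of_notMem
    (p := LinearMap.range Bᵀ.mulVecLin) (v := d) (by rintro ⟨f, hf⟩; exact hd_range f hf)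
  set g := (dotProductEquiv K V).symm φ
  have hφg : ∀ x, φ x = g ⬝ᵥ x := fun x => by
    rw [← dotProductEquiv_apply_apply, LinearEquiv.apply_symm_apply]
  have hBg : B *ᵥ g = 0 := by
    have h := hφ (LinearMap.mem_range_self Bᵀ.mulVecLin (B *ᵥ g))
    rwa [LinearMap.mem_ker, Matrix.mulVecLin_apply, hφg, Matrix.dotProduct_mulVec,
      Matrix.vecMul_transpose, dotProduct_self_eq_zero] at h
  obtain ⟨c, hc⟩ := hker g hBg
  apply hφd
  simp [hφg, dotProduct, hc, ← mul_sum, hd]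

section HolderDual

variable {ι : Type*} [Fintype ι] {p q : ℝ} {x : ι → ℝ}

noncomputable def pNorm (p : ℝ) (x : ι → ℝ) : ℝ := (∑ i, x i ^ p) ^ (1 / p)

/-- The extremal vector of Hölder's inequality for `x ≥ 0` (zero if `x = 0`). -/
noncomputable def holderDual (p : ℝ) (x : ι → ℝ) (i : ι) : ℝ :=
  (∑ j, x j ^ p) ^ (1 / p - 1) * x i ^ (p - 1)

lemma pNorm_nonneg (hx : ∀ i, 0 ≤ x i) : 0 ≤ pNorm p x :=
  Real.rpow_nonneg (sum_nonneg fun i _ => Real.rpow_nonneg (hx i) p) _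

lemma pNorm_const_mul (hp : p ≠ 0) {c : ℝ} (hc : 0 ≤ c) (hx : ∀ i, 0 ≤ x i) :
    pNorm p (fun i => c * x i) = c * pNorm p x := by
  simp only [pNorm, Real.mul_rpow hc (hx _), ← mul_sum]
  rw [Real.mul_rpow (Real.rpow_nonneg hc p) (sum_nonneg fun i _ => Real.rpow_nonneg (hx i) p),
    ← Real.rpow_mul hc, mul_one_div_cancel hp, Real.rpow_one]

lemma holderDual_nonneg (hx : ∀ i, 0 ≤ x i) (i : ι) : 0 ≤ holderDual p x i :=
  mul_nonneg (Real.rpow_nonneg (sum_nonneg fun j _ => Real.rpow_nonneg (hx j) p) _)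
    (Real.rpow_nonneg (hx i) _)

lemma sum_mul_holderDual (hp : p ≠ 0) (hx : ∀ i, 0 ≤ x i) :
    ∑ i, x i * holderDual p x i = pNorm p x := by
  have hS : 0 ≤ ∑ i, x i ^ p := sum_nonneg fun i _ => Real.rpow_nonneg (hx i) p
  have hxp : ∀ i, x i * x i ^ (p - 1) = x i ^ p := fun i => by
    rw [mul_comm, ← Real.rpow_add_one' (hx i) (by simpa using hp), sub_add_cancel]
  simp only [holderDual, mul_left_comm (x _), hxp, ← mul_sum]
  rw [← Real.rpow_add_one' hS (by simpa using hp), sub_add_cancel, pNorm]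

lemma pNorm_holderDual_le_one (hpq : p.HolderConjugate q) (hx : ∀ i, 0 ≤ x i) :
    pNorm q (holderDual p x) ≤ 1 := by
  have hexp : (1 / p - 1) * q = -1 := by
    rw [one_div, hpq.inv_sub_one, neg_mul, inv_mul_cancel₀ hpq.symm.ne_zero]
  rcases (sum_nonneg fun i _ => Real.rpow_nonneg (hx i) p : 0 ≤ ∑ i, x i ^ p).eq_or_lt
    with hS0 | hSpos
  · have h0 : holderDual p x = 0 := funext fun i => by
      rw [holderDual, ← hS0, Real.zero_rpow, zero_mul, Pi.zero_apply]
      rw [one_div, hpq.inv_sub_one]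
      exact neg_ne_zero.2 hpq.symm.inv_ne_zero
    simp [pNorm, h0, Real.zero_rpow hpq.symm.ne_zero, Real.zero_rpow hpq.symm.inv_ne_zero]
  · have hterm : ∀ i, holderDual p x i ^ q = (∑ j, x j ^ p)⁻¹ * x i ^ p := fun i => by
      rw [holderDual, Real.mul_rpow (Real.rpow_nonneg hSpos.le _) (Real.rpow_nonneg (hx i) _),
        ← Real.rpow_mul hSpos.le, ← Real.rpow_mul (hx i), hexp, hpq.sub_one_mul_conj,
        Real.rpow_neg_one]
    rw [pNorm]
    simp only [hterm, ← mul_sum, inv_mul_cancel₀ hSpos.ne', Real.one_rpow, le_refl]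

lemma hasDerivAt_pNorm {g : ι → ℝ → ℝ} {g' : ι → ℝ} {t : ℝ}
    (hg : ∀ i, HasDerivAt (g i) (g' i) t) (hp : 1 ≤ p) (hS : ∑ i, g i t ^ p ≠ 0) :
    HasDerivAt (fun s => pNorm p fun i => g i s)
      (∑ i, holderDual p (fun i => g i t) i * g' i) t := by
  refine ((HasDerivAt.fun_sum fun i _ => (hg i).rpow_const (Or.inr hp)).rpow_const
    (p := 1 / p) (Or.inl hS)).congr_deriv ?_
  simp only [holderDual, sum_mul]
  refine sum_congr rfl fun i _ => ?_
  field_simp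

end HolderDual

theorem isCompact_setOf_sum_mul_sq_le {E : Type*} [Fintype E] {r : E → ℝ} (hr : ∀ e, 0 < r e)
    (c : ℝ) : IsCompact {f : E → ℝ | ∑ e, r e * f e ^ 2 ≤ c} := by
  refine (isCompact_univ_pi fun e => isCompact_Icc (a := -√(c / r e)) (b := √(c / r e)))
    |>.of_isClosed_subset (isClosed_le (by fun_prop) continuous_const) fun f hf e _ => ?_
  have hfe : r e * f e ^ 2 ≤ c :=
    (single_le_sum (fun e _ => mul_nonneg (hr e).le (sq_nonneg (f e))) (mem_univ e)).trans hf
  exact abs_le.1 (Real.abs_le_sqrt ((le_div_iff₀' (hr e)).2 hfe))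

lemma sum_mul_sq_le_of_sum_mul_mul_sub_eq_zero {E : Type*} [Fintype E] {a f g : E → ℝ}
    (ha : ∀ e, 0 ≤ a e) (horth : ∑ e, a e * g e * (f e - g e) = 0) :
    ∑ e, a e * g e ^ 2 ≤ ∑ e, a e * f e ^ 2 := by
  have hexpand : ∑ e, a e * f e ^ 2 = ∑ e, a e * g e ^ 2 + 2 * ∑ e, a e * g e * (f e - g e)
      + ∑ e, a e * (f e - g e) ^ 2 := by
    simp only [mul_sum, ← sum_add_distrib]
    exact sum_congr rfl fun e _ => by ring
  rw [hexpand, horth]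
  linarith [sum_nonneg fun e (_ : e ∈ univ) => mul_nonneg (ha e) (sq_nonneg (f e - g e))]

section SmoothedEnergy

variable {E : Type*} [Fintype E] {r C : E → ℝ} {W p q : ℝ}

noncomputable def smoothedEnergy (r C : E → ℝ) (W p : ℝ) (f : E → ℝ) : ℝ :=
  ∑ e, r e * f e ^ 2 + W * pNorm p (fun e => f e ^ 2 / C e)

/-- The maximizing `r'` of the left-hand side, once `f` is a minimizer of the smoothed energy. -/
noncomputable def extremalWeight (C : E → ℝ) (W p : ℝ) (f : E → ℝ) (e : E) : ℝ :=
  W * holderDual p (fun e => f e ^ 2 / C e) e / C e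

lemma sum_mul_sq_le_smoothedEnergy (hC : ∀ e, 0 < C e) (hpq : p.HolderConjugate q)
    {r' : E → ℝ} (hr' : ∀ e, 0 ≤ r' e) (hr'W : pNorm q (fun e => C e * r' e) ≤ W)
    (f : E → ℝ) : ∑ e, (r e + r' e) * f e ^ 2 ≤ smoothedEnergy r C W p f := by
  have hx : ∀ e, 0 ≤ f e ^ 2 / C e := fun e => div_nonneg (sq_nonneg _) (hC e).le
  calc ∑ e, (r e + r' e) * f e ^ 2
      = ∑ e, r e * f e ^ 2 + ∑ e, f e ^ 2 / C e * (C e * r' e) := by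
        rw [← sum_add_distrib]
        exact sum_congr rfl fun e _ => by field_simp [(hC e).ne']
    _ ≤ ∑ e, r e * f e ^ 2 +
          pNorm p (fun e => f e ^ 2 / C e) * pNorm q (fun e => C e * r' e) :=
        add_le_add_right (Real.inner_le_Lp_mul_Lq_of_nonneg univ hpq (fun e _ => hx e)
          fun e _ => mul_nonneg (hC e).le (hr' e)) _
    _ ≤ smoothedEnergy r C W p f := by
        rw [smoothedEnergy, mul_comm W]
        gcongr
        exact pNorm_nonneg hx

lemma extremalWeight_nonneg (hC : ∀ e, 0 < C e) (hW : 0 ≤ W) (f : E → ℝ) (e : E) :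
    0 ≤ extremalWeight C W p f e :=
  div_nonneg (mul_nonneg hW (holderDual_nonneg (fun e => div_nonneg (sq_nonneg _) (hC e).le) e))
    (hC e).le

lemma pNorm_mul_extremalWeight_le (hC : ∀ e, 0 < C e) (hW : 0 ≤ W)
    (hpq : p.HolderConjugate q) (f : E → ℝ) :
    pNorm q (fun e => C e * extremalWeight C W p f e) ≤ W := by
  have hx : ∀ e, 0 ≤ f e ^ 2 / C e := fun e => div_nonneg (sq_nonneg _) (hC e).le
  have hCw : ∀ e, C e * extremalWeight C W p f e =
      W * holderDual p (fun e => f e ^ 2 / C e) e := fun e => mul_div_cancel₀ _ (hC e).ne'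
  simp only [hCw]
  rw [pNorm_const_mul hpq.symm.ne_zero hW (holderDual_nonneg hx)]
  exact mul_le_of_le_one_right hW (pNorm_holderDual_le_one hpq hx)

lemma sum_add_extremalWeight_mul_sq (hC : ∀ e, 0 < C e) (hp : p ≠ 0) (f : E → ℝ) :
    ∑ e, (r e + extremalWeight C W p f e) * f e ^ 2 = smoothedEnergy r C W p f := by
  have hx : ∀ e, 0 ≤ f e ^ 2 / C e := fun e => div_nonneg (sq_nonneg _) (hC e).le
  rw [smoothedEnergy, ← sum_mul_holderDual hp hx, mul_sum, ← sum_add_distrib]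
  exact sum_congr rfl fun e _ => by
    rw [extremalWeight]; field_simp [(hC e).ne']

lemma continuous_smoothedEnergy (hp : 0 ≤ p) : Continuous (smoothedEnergy r C W p) := by
  unfold smoothedEnergy pNorm
  fun_prop (disch := first | exact hp | positivity)

lemma exists_isMinOn_smoothedEnergy (hr : ∀ e, 0 < r e) (hC : ∀ e, 0 < C e) (hW : 0 ≤ W)
    (hp : 0 ≤ p) {A : Set (E → ℝ)} (hA : IsClosed A) {f₀ : E → ℝ} (hf₀ : f₀ ∈ A) :
    ∃ f ∈ A, IsMinOn (smoothedEnergy r C W p) A f := by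
  have hquad_le : ∀ f, ∑ e, r e * f e ^ 2 ≤ smoothedEnergy r C W p f := fun f =>
    le_add_of_nonneg_right (mul_nonneg hW
      (pNorm_nonneg fun e => div_nonneg (sq_nonneg _) (hC e).le))
  refine (continuous_smoothedEnergy hp).continuousOn.exists_isMinOn' hA hf₀ ?_
  refine Filter.Eventually.filter_mono inf_le_left ?_
  filter_upwards
    [(isCompact_setOf_sum_mul_sq_le hr (smoothedEnergy r C W p f₀)).compl_mem_cocompact]
    with f hf
  rw [Set.mem_compl_iff, Set.mem_ofPred_eq, not_le] at hf
  exact hf.le.trans (hquad_le f)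

lemma sum_add_extremalWeight_mul_mul_eq_zero (hC : ∀ e, 0 < C e) (hp : 1 ≤ p) {f δ : E → ℝ}
    (hmin : ∀ t : ℝ, smoothedEnergy r C W p f ≤ smoothedEnergy r C W p (f + t • δ)) :
    ∑ e, (r e + extremalWeight C W p f e) * f e * δ e = 0 := by
  rcases eq_or_ne f 0 with rfl | hf
  · simp
  have hS : ∑ e, (f e ^ 2 / C e) ^ p ≠ 0 := by
    obtain ⟨e, he⟩ := Function.ne_iff.1 hf
    exact (sum_pos' (fun e _ => Real.rpow_nonneg (div_nonneg (sq_nonneg _) (hC e).le) p)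
      ⟨e, mem_univ e, Real.rpow_pos_of_pos (div_pos (sq_pos_of_ne_zero he) (hC e)) p⟩).ne'
  have hsq : ∀ e, HasDerivAt (fun t : ℝ => (f e + t * δ e) ^ 2) (2 * f e * δ e) 0 := fun e => by
    simpa using (((hasDerivAt_id (0 : ℝ)).mul_const (δ e)).const_add (f e)).fun_pow 2
  have hnorm := hasDerivAt_pNorm (fun e => (hsq e).div_const (C e)) hp (by simpa using hS)
  simp only [zero_mul, add_zero] at hnorm
  have hderiv : HasDerivAt (fun t : ℝ => smoothedEnergy r C W p (f + t • δ))
      (2 * ∑ e, (r e + extremalWeight C W p f e) * f e * δ e) 0 := by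
    refine ((HasDerivAt.fun_sum fun e _ => (hsq e).const_mul (r e)).add
      (hnorm.const_mul W)).congr_deriv ?_
    simp only [extremalWeight, mul_sum, ← sum_add_distrib]
    exact sum_congr rfl fun e _ => by field_simp [(hC e).ne']
  have hloc : IsLocalMin (fun t : ℝ => smoothedEnergy r C W p (f + t • δ)) 0 :=
    Filter.Eventually.of_forall fun t => by simpa using hmin t
  simpa using hloc.hasDerivAt_eq_zero hderiv

lemma isLeast_sum_add_extremalWeight_mul_sq {V : Type*} [Fintype V] (hr : ∀ e, 0 ≤ r e)
    (hC : ∀ e, 0 < C e) (hW : 0 ≤ W) (hp : 1 ≤ p) (B : Matrix E V ℝ) (d : V → ℝ)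
    {fs : E → ℝ} (hfs : Bᵀ *ᵥ fs = d)
    (hmin : IsMinOn (smoothedEnergy r C W p) {f | Bᵀ *ᵥ f = d} fs) :
    IsLeast {y | ∃ f : E → ℝ, Bᵀ *ᵥ f = d ∧
      y = ∑ e, (r e + extremalWeight C W p fs e) * f e ^ 2} (smoothedEnergy r C W p fs) := by
  have henergy : ∑ e, (r e + extremalWeight C W p fs e) * fs e ^ 2 =
      smoothedEnergy r C W p fs :=
    sum_add_extremalWeight_mul_sq hC (zero_lt_one.trans_le hp).ne' fs
  refine ⟨⟨fs, hfs, henergy.symm⟩, ?_⟩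
  rintro _ ⟨f, hf, rfl⟩
  rw [← henergy]
  refine sum_mul_sq_le_of_sum_mul_mul_sub_eq_zero
    (fun e => add_nonneg (hr e) (extremalWeight_nonneg hC hW fs e))
    (sum_add_extremalWeight_mul_mul_eq_zero hC hp fun t => hmin ?_)
  change Bᵀ *ᵥ (fs + t • (f - fs)) = d
  rw [Matrix.mulVec_add, Matrix.mulVec_smul, Matrix.mulVec_sub, hf, hfs, sub_self, smul_zero,
    add_zero]

end SmoothedEnergy

theorem budget_energy_minimax_lq_general {V E : Type*} [Fintype V] [Fintype E] [DecidableEq V]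
    (B : Matrix E V ℝ)
    (hconn : ∀ x : V → ℝ, B.mulVec x = 0 → ∃ c : ℝ, ∀ v, x v = c)
    (d : V → ℝ) (hd : ∑ v, d v = 0)
    (r : E → ℝ) (hr : ∀ e, 0 < r e)
    (C : E → ℝ) (hC : ∀ e, 0 < C e)
    (W : ℝ) (hW : 0 ≤ W)
    (p q : ℝ) (hp : 1 < p) (hpq : 1 / p + 1 / q = 1) :
    ∃ t : ℝ,
      IsGreatest {x : ℝ | ∃ r' : E → ℝ, (∀ e, 0 ≤ r' e) ∧
        (∑ e, (C e * r' e) ^ q) ^ (1 / q) ≤ W ∧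
        x = sInf {y : ℝ | ∃ f : E → ℝ, B.transpose.mulVec f = d ∧
          y = ∑ e, (r e + r' e) * f e ^ 2}} t ∧
      IsLeast {y : ℝ | ∃ f : E → ℝ, B.transpose.mulVec f = d ∧
        y = (∑ e, r e * f e ^ 2) + W * (∑ e, (f e ^ 2 / C e) ^ p) ^ (1 / p)} t := by
  have hpq' : p.HolderConjugate q :=
    Real.holderConjugate_iff.2 ⟨hp, by simpa only [one_div] using hpq⟩
  obtain ⟨f₀, hf₀⟩ := exists_transpose_mulVec_eq B hconn d hd
  obtain ⟨fs, hfs, hmin⟩ := exists_isMinOn_smoothedEnergy hr hC hW hpq'.nonneg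
    (isClosed_eq (continuous_const.matrix_mulVec continuous_id) continuous_const) (f₀ := f₀) hf₀
  have hleast := isLeast_sum_add_extremalWeight_mul_sq (fun e => (hr e).le) hC hW hp.le B d hfs hmin
  refine ⟨smoothedEnergy r C W p fs, ⟨⟨extremalWeight C W p fs, extremalWeight_nonneg hC hW fs,
    pNorm_mul_extremalWeight_le hC hW hpq' fs, hleast.csInf_eq.symm⟩, ?_⟩, ⟨fs, hfs, rfl⟩, ?_⟩
  · rintro _ ⟨r', hr', hr'W, rfl⟩
    have hbdd : BddBelow {y | ∃ f : E → ℝ, Bᵀ *ᵥ f = d ∧ y = ∑ e, (r e + r' e) * f e ^ 2} :=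
      ⟨0, by rintro _ ⟨f, -, rfl⟩; exact sum_nonneg fun e _ =>
        mul_nonneg (add_nonneg (hr e).le (hr' e)) (sq_nonneg _)⟩
    exact (csInf_le hbdd ⟨fs, hfs, rfl⟩).trans (sum_mul_sq_le_smoothedEnergy hC hpq' hr' hr'W fs)
  · rintro _ ⟨f, hf, rfl⟩
    exact hmin hf

/-- Dual-norm smoothing of the budget constraint: for conjugate exponents
`p, q ∈ (1, ∞)`,
`max_{r' ≥ 0, ‖Cr'‖_q ≤ W} min_{Bᵀf = d} fᵀ(R + diag r')f
  = min_{Bᵀf = d} (fᵀRf + W ‖C^{-1/2} f‖_{2p}²)`,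
stated as existence of a common value attained on both sides. -/
theorem budget_energy_minimax_lq {V E : Type*} [Fintype V] [Fintype E] [DecidableEq V]
    (B : Matrix E V ℝ)
    (hrows : ∀ e : E, ∃ u v : V, u ≠ v ∧
      ∀ w, B e w = (if w = v then (1 : ℝ) else 0) - (if w = u then 1 else 0))
    (hconn : ∀ x : V → ℝ, B.mulVec x = 0 → ∃ c : ℝ, ∀ v, x v = c)
    (d : V → ℝ) (hd : ∑ v, d v = 0)
    (r : E → ℝ) (hr : ∀ e, 0 < r e)
    (C : E → ℝ) (hC : ∀ e, 0 < C e)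
    (W : ℝ) (hW : 0 ≤ W)
    (p q : ℝ) (hp : 1 < p) (hq : 1 < q) (hpq : 1 / p + 1 / q = 1) :
    ∃ t : ℝ,
      IsGreatest {x : ℝ | ∃ r' : E → ℝ, (∀ e, 0 ≤ r' e) ∧
        (∑ e, (C e * r' e) ^ q) ^ (1 / q) ≤ W ∧
        x = sInf {y : ℝ | ∃ f : E → ℝ, B.transpose.mulVec f = d ∧
          y = ∑ e, (r e + r' e) * f e ^ 2}} t ∧
      IsLeast {y : ℝ | ∃ f : E → ℝ, B.transpose.mulVec f = d ∧
        y = (∑ e, r e * f e ^ 2) + W * (∑ e, (f e ^ 2 / C e) ^ p) ^ (1 / p)} t :=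
  budget_energy_minimax_lq_general B hconn d hd r hr C hC W hW p q hp hpq
end
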